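/- Assume (F0), (F1), (F2) and (F012), and set δ' := 1−γ⁻¹·δ. Let N,M∈ℕ, let τ₀,…,τ_M ∈ {0,2}, and let q∈ℝ with δ' ≤ q < f₀(δ'). Assume that f₀^j(q) ∈ H' for all j=0,…,N, that y₀ := f₁(f₀^N(q)) ∈ H, and that the points y_j := f_{τ_{j−1}}(y_{j−1}) lie in H for all j=1,…,M. Then, for the word w := (0,…,0,1,τ₀,…,τ_M) consisting of N zeros followed by the symbol 1 followed by τ₀,…,τ_M (so that w has length N+M+2), one has (1/(N+M+2))·log|(f_[w])'(q)| < log β'. -/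

import Mathlib

open Set Filter MeasureTheory

noncomputable section

/-- Condition (F0) on the fiber map `f₀`. -/
def F0cond (f₀ : ℝ → ℝ) (β₀ lam₀ : ℝ) : Prop :=
  ContDiff ℝ 1 f₀ ∧ Set.MapsTo f₀ (Set.Icc 0 1) (Set.Icc 0 1) ∧
  StrictMonoOn f₀ (Set.Icc 0 1) ∧ f₀ 0 = 0 ∧ f₀ 1 = 1 ∧
  (∀ x ∈ Set.Ioo (0:ℝ) 1, x < f₀ x) ∧
  deriv f₀ 0 = β₀ ∧ 1 < β₀ ∧ deriv f₀ 1 = lam₀ ∧ 0 < lam₀ ∧ lam₀ < 1 ∧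
  (∀ x ∈ Set.Icc (0:ℝ) 1, lam₀ ≤ deriv f₀ x)

/-- Condition (F1) on the fiber map `f₁`. -/
def F1cond (f₁ : ℝ → ℝ) (γ lam₀ : ℝ) : Prop :=
  (∀ x, f₁ x = γ * (1 - x)) ∧ lam₀ ≤ γ ∧ γ < 1

/-- Condition (F2) on the fiber map `f₂`. -/
def F2cond (f₂ : ℝ → ℝ) (β₂ lam₀ : ℝ) : Prop :=
  ContDiff ℝ 1 f₂ ∧ Set.MapsTo f₂ (Set.Icc 0 1) (Set.Icc 0 1) ∧
  StrictMonoOn f₂ (Set.Icc 0 1) ∧ f₂ 0 = 0 ∧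
  deriv f₂ 0 = β₂ ∧ 1 < β₂ ∧ (∀ x ∈ Set.Icc (0:ℝ) 1, lam₀ ≤ deriv f₂ x) ∧
  ∃ p₂, p₂ ∈ Set.Ioo (0:ℝ) 1 ∧ f₂ p₂ = p₂ ∧ (∀ x ∈ Set.Ioo 0 p₂, x < f₂ x) ∧
    (∀ x ∈ Set.Ioc p₂ 1, f₂ x < x)

/-- Condition (F01). -/
def F01cond (f₀ : ℝ → ℝ) (β₀ lam₀ γ : ℝ) : Prop :=
  AntitoneOn (deriv f₀) (Set.Icc 0 1) ∧
  1 < γ * (lam₀ ^ 3 * (1 - lam₀) / (1 - β₀⁻¹))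

/-- Condition (F012), with `H = [0,δ]`, `H' = [1-γ⁻¹δ,1]`, and the derived constants
`β' = βpr`, `β_H = βH`, `λ' = lampr`, `L`. -/
def F012cond (f₀ f₁ f₂ : ℝ → ℝ) (γ lam₀ β₀ β₂ δ βpr βH lampr : ℝ) (L : ℕ) : Prop :=
  (∀ x ∈ Set.Icc (0:ℝ) 1, deriv f₀ x ≤ max β₀ β₂ ∧ deriv f₂ x ≤ max β₀ β₂) ∧
  0 < δ ∧ δ < γ ∧
  (f₁ '' Set.Icc 0 δ) ∩ Set.Icc 0 δ = ∅ ∧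
  (f₁ '' Set.Icc (1 - γ⁻¹ * δ) 1) ∩ Set.Icc (1 - γ⁻¹ * δ) 1 = ∅ ∧
  (f₁ '' Set.Icc 0 1) ∩ Set.Icc (1 - γ⁻¹ * δ) 1 = ∅ ∧
  (f₂ '' Set.Icc 0 1) ∩ Set.Icc (1 - γ⁻¹ * δ) 1 = ∅ ∧
  IsGreatest {y | ∃ x ∈ Set.Icc δ 1, y = max (deriv f₀ x) (deriv f₂ x)} βpr ∧
  1 < βpr ∧ βpr < min β₀ β₂ ∧
  IsLeast {y | ∃ x ∈ Set.Icc (0:ℝ) δ, y = min (deriv f₀ x) (deriv f₂ x)} βH ∧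
  1 < βH ∧ βH < min β₀ β₂ ∧
  IsGreatest {y | ∃ x ∈ Set.Icc (1 - γ⁻¹ * δ) 1, y = deriv f₀ x} lampr ∧
  lampr < 1 ∧
  |Real.log lam₀| * Real.log (max β₀ β₂) / Real.log βH - |Real.log lampr|
      + (2 / 3) * Real.log (max β₀ β₂) < (3 / 4) * Real.log βpr ∧
  1 ≤ L ∧
  4 * |Real.log lam₀| * Real.log (max β₀ β₂) / (Real.log βH * Real.log βpr) < (L : ℝ) ∧
  Real.log ((max β₀ β₂) ^ L * γ) / ((L : ℝ) + 1) < Real.log βpr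

/-- `f_{ξ_{n-1}} ∘ ⋯ ∘ f_{ξ₀}`. -/
def seqComp (fs : Fin 3 → ℝ → ℝ) (ξ : ℕ → Fin 3) : ℕ → ℝ → ℝ
  | 0 => id
  | n + 1 => fun x => fs (ξ n) (seqComp fs ξ n x)

/-- The upper Lyapunov exponent of the point `p` under the itinerary `ξ`. -/
def lyapUpper (fs : Fin 3 → ℝ → ℝ) (p : ℝ) (ξ : ℕ → Fin 3) : ℝ :=
  Filter.limsup (fun n : ℕ => (1 / (n : ℝ)) * Real.log |deriv (seqComp fs ξ n) p|) Filter.atTop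

/-- Membership in the exceptional set `E`. -/
def exceptional (fs : Fin 3 → ℝ → ℝ) (p : ℝ) (ξ : ℕ → Fin 3) : Prop :=
  ∃ m : ℕ, seqComp fs ξ m p = 0 ∧ ∀ j, m ≤ j → (ξ j = 0 ∨ ξ j = 2)

/-- `f_[w] = f_{w_{m-1}} ∘ ⋯ ∘ f_{w₀}` for a finite word `w`. -/
def wordComp {α : Type*} (fs : α → ℝ → ℝ) (w : List α) : ℝ → ℝ :=
  fun x => w.foldl (fun y i => fs i y) x

/-- The two-sided sequence space `Σ₃`. -/
abbrev Sig3 := ℤ → Fin 3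

/-- The state space `Σ₃ × [0,1]`. -/
abbrev XSp := Sig3 × (Set.Icc (0:ℝ) 1)

instance : UniformSpace (Fin 3) := ⊥

/-- The left shift on `Σ₃`. -/
def shiftMap (ξ : Sig3) : Sig3 := fun i => ξ (i + 1)

/-- The step skew product `G(ξ,x) = (σξ, f_{ξ₀}(x))` on `Σ₃ × [0,1]`. -/
def Gmap (fs : Fin 3 → ℝ → ℝ) : XSp → XSp :=
  fun p => (shiftMap p.1, Set.projIcc 0 1 (by norm_num) (fs (p.1 0) (p.2 : ℝ)))

/-- The maximal invariant set `Λ_G = ⋂ₙ Gⁿ(Σ₃ × [0,1])`. -/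
def LamG (fs : Fin 3 → ℝ → ℝ) : Set XSp := ⋂ n : ℕ, (Gmap fs)^[n] '' Set.univ

/-- The lateral horseshoe `Λ₀₂`. -/
def Lam02 : Set XSp := {p | (∀ i, p.1 i ≠ 1) ∧ (p.2 : ℝ) = 0}

/-- The central derivative potential `φ(ξ,x) = log|f_{ξ₀}'(x)|`. -/
def phiC (fs : Fin 3 → ℝ → ℝ) (p : XSp) : ℝ := Real.log |deriv (fs (p.1 0)) (p.2 : ℝ)|

/-- The central Lyapunov exponent `χ(μ) = ∫ φ dμ` of a measure. -/
def chiOf (fs : Fin 3 → ℝ → ℝ) (μ : Measure XSp) : ℝ := ∫ p, phiC fs p ∂μ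

/-- `ν` is the `(p 0, p 1, p 2)`-Bernoulli measure on `Σ₃`. -/
def IsBernoulli (p : Fin 3 → ℝ) (ν : Measure Sig3) : Prop :=
  IsProbabilityMeasure ν ∧ ∀ (s : Finset ℤ) (a : ℤ → Fin 3),
    ν {ξ | ∀ i ∈ s, ξ i = a i} = ENNReal.ofReal (∏ i ∈ s, p (a i))


/-! The derivative along `0^N 1 τ₀ … τ_M` factors as a contraction of at most `λ'^N` along
the stay in `H'`, the factor `γ` of `f₁`, and an expansion of at most `(β⁺)^(M+1)` along the stay
in `H`. Since `1 - f₀ x ≥ λ₀ (1 - x)`, the orbit enters `H` at distance at least `λ₀^(N+1) δ`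
from `0`, and each step in `H = [0, δ]` expands by at least `β_H`; hence `β_H^M λ₀^(N+1) ≤ 1`,
i.e. `M` is at most linear in `N`. A short tail (`M < L`) is then absorbed by the choice of `L`,
a long one by the contraction accumulated along the head. -/

section WordComp

variable {α : Type*} (fs : α → ℝ → ℝ)

theorem wordComp_append (v w : List α) :
    wordComp fs (v ++ w) = wordComp fs w ∘ wordComp fs v := by
  funext x
  simp only [wordComp, List.foldl_append, Function.comp_apply]

theorem differentiable_wordComp (hfs : ∀ i, Differentiable ℝ (fs i)) (w : List α) :
    Differentiable ℝ (wordComp fs w) := by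
  induction w with
  | nil => exact differentiable_id
  | cons i w ih => exact ih.comp (hfs i)

theorem deriv_wordComp_append (hfs : ∀ i, Differentiable ℝ (fs i)) (v w : List α) (x : ℝ) :
    deriv (wordComp fs (v ++ w)) x =
      deriv (wordComp fs w) (wordComp fs v x) * deriv (wordComp fs v) x := by
  rw [wordComp_append]
  exact deriv_comp x (differentiable_wordComp fs hfs w _)
    (differentiable_wordComp fs hfs v x)

end WordComp

section SeqComp

variable (fs : Fin 3 → ℝ → ℝ)

theorem wordComp_ofFn (ξ : ℕ → Fin 3) (n : ℕ) :
    wordComp fs (List.ofFn fun j : Fin n => ξ j) = seqComp fs ξ n := by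
  induction n with
  | zero => rfl
  | succ n ih =>
    rw [List.ofFn_succ', List.concat_eq_append, wordComp_append]
    simp only [Fin.val_castSucc, Fin.val_last, ih]
    rfl

theorem seqComp_const (i : Fin 3) (n : ℕ) : seqComp fs (fun _ => i) n = (fs i)^[n] := by
  induction n with
  | zero => rfl
  | succ n ih =>
    funext x
    rw [Function.iterate_succ_apply', ← ih]
    rfl

theorem differentiable_seqComp (hfs : ∀ i, Differentiable ℝ (fs i)) (ξ : ℕ → Fin 3) (n : ℕ) :
    Differentiable ℝ (seqComp fs ξ n) :=
  wordComp_ofFn fs ξ n ▸ differentiable_wordComp fs hfs _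

theorem deriv_seqComp_succ (hfs : ∀ i, Differentiable ℝ (fs i)) (ξ : ℕ → Fin 3) (n : ℕ)
    (x : ℝ) :
    deriv (seqComp fs ξ (n + 1)) x =
      deriv (fs (ξ n)) (seqComp fs ξ n x) * deriv (seqComp fs ξ n) x :=
  deriv_comp (h₂ := fs (ξ n)) x (hfs _ _) (differentiable_seqComp fs hfs ξ n x)

theorem deriv_seqComp_mem_Ioc (hfs : ∀ i, Differentiable ℝ (fs i)) {ξ : ℕ → Fin 3} {x c : ℝ}
    {n : ℕ} (h : ∀ j < n, deriv (fs (ξ j)) (seqComp fs ξ j x) ∈ Ioc 0 c) :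
    deriv (seqComp fs ξ n) x ∈ Ioc 0 (c ^ n) := by
  induction n with
  | zero => simp [seqComp]
  | succ n ih =>
    obtain ⟨hpos, hle⟩ := ih fun j hj => h j (Nat.lt_succ_of_lt hj)
    obtain ⟨hfpos, hfle⟩ := h n n.lt_succ_self
    rw [deriv_seqComp_succ fs hfs, pow_succ']
    exact ⟨mul_pos hfpos hpos, mul_le_mul hfle hle hpos.le (hfpos.le.trans hfle)⟩

theorem deriv_wordComp_ofFn_append_ofFn (hfs : ∀ i, Differentiable ℝ (fs i))
    (ξ η : ℕ → Fin 3) (n m : ℕ) (i : Fin 3) (x : ℝ) :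
    deriv (wordComp fs
        ((List.ofFn fun j : Fin n => ξ j) ++ [i] ++ List.ofFn fun j : Fin m => η j)) x =
      deriv (seqComp fs η m) (fs i (seqComp fs ξ n x)) *
        (deriv (fs i) (seqComp fs ξ n x) * deriv (seqComp fs ξ n) x) := by
  rw [deriv_wordComp_append fs hfs, deriv_wordComp_append fs hfs, wordComp_append, wordComp_ofFn,
    wordComp_ofFn]
  rfl

end SeqComp

theorem seqComp_eq_of_rec {fs : Fin 3 → ℝ → ℝ} {τ : ℕ → Fin 3} {y : ℕ → ℝ} {M : ℕ}
    (hyrec : ∀ j, 1 ≤ j → j ≤ M → y j = fs (τ (j - 1)) (y (j - 1))) :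
    ∀ j ≤ M, seqComp fs τ j (y 0) = y j := by
  intro j hj
  induction j with
  | zero => rfl
  | succ j ih =>
    rw [hyrec (j + 1) (Nat.le_add_left 1 j) hj, Nat.add_sub_cancel, ← ih (Nat.le_of_succ_le hj)]
    rfl

theorem one_sub_inv_mul_mem_Icc {γ δ : ℝ} (hδ : 0 ≤ δ) (hδγ : δ < γ) :
    1 - γ⁻¹ * δ ∈ Icc (0 : ℝ) 1 := by
  have hγ : 0 < γ := hδ.trans_lt hδγ
  constructor
  · rw [sub_nonneg, inv_mul_le_iff₀ hγ, mul_one]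
    exact hδγ.le
  · have : 0 ≤ γ⁻¹ * δ := by positivity
    linarith

theorem mul_sub_le_sub_of_le_deriv_Icc {f : ℝ → ℝ} (hf : Differentiable ℝ f) {a b C : ℝ}
    (hC : ∀ x ∈ Icc a b, C ≤ deriv f x) {x y : ℝ} (hx : x ∈ Icc a b) (hy : y ∈ Icc a b)
    (hxy : x ≤ y) : C * (y - x) ≤ f y - f x :=
  (convex_Icc a b).mul_sub_le_image_sub_of_le_deriv hf.continuous.continuousOn
    hf.differentiableOn (fun z hz => hC z (interior_subset hz)) x hx y hy hxy

theorem mul_le_of_le_deriv_Icc {f : ℝ → ℝ} (hf : Differentiable ℝ f) (hf0 : f 0 = 0) {c δ : ℝ}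
    (hc : ∀ x ∈ Icc (0 : ℝ) δ, c ≤ deriv f x) {x : ℝ} (hx : x ∈ Icc (0 : ℝ) δ) : c * x ≤ f x := by
  simpa only [sub_zero, hf0] using
    mul_sub_le_sub_of_le_deriv_Icc hf hc (left_mem_Icc.2 (hx.1.trans hx.2)) hx hx.1

theorem pow_mul_one_sub_le_one_sub_iterate {f : ℝ → ℝ} (hf : Differentiable ℝ f) (hf1 : f 1 = 1)
    {c : ℝ} (hc : 0 ≤ c) (hderiv : ∀ x ∈ Icc (0 : ℝ) 1, c ≤ deriv f x) {x : ℝ} {n : ℕ}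
    (horbit : ∀ j < n, f^[j] x ∈ Icc (0 : ℝ) 1) :
    c ^ n * (1 - x) ≤ 1 - f^[n] x := by
  refine geom_le (u := fun j => 1 - f^[j] x) hc n fun j hj => ?_
  have h := mul_sub_le_sub_of_le_deriv_Icc hf hderiv (horbit j hj)
    (right_mem_Icc.2 zero_le_one) (horbit j hj).2
  simpa only [Function.iterate_succ_apply', hf1] using h

section FiberMaps

variable {f₀ f₁ f₂ : ℝ → ℝ} {β₀ β₂ lam₀ γ : ℝ}

theorem F0cond.differentiable (h0 : F0cond f₀ β₀ lam₀) : Differentiable ℝ f₀ :=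
  h0.1.differentiable one_ne_zero

theorem F2cond.differentiable (h2 : F2cond f₂ β₂ lam₀) : Differentiable ℝ f₂ :=
  h2.1.differentiable one_ne_zero

theorem F1cond.hasDerivAt (h1 : F1cond f₁ γ lam₀) (x : ℝ) : HasDerivAt f₁ (-γ) x := by
  rw [show f₁ = fun x => γ * (1 - x) from funext h1.1]
  simpa using ((hasDerivAt_const x 1).sub (hasDerivAt_id x)).const_mul γ

theorem F0cond.lam₀_pos (h0 : F0cond f₀ β₀ lam₀) : 0 < lam₀ := by
  obtain ⟨-, -, -, -, -, -, -, -, -, hlam₀, -⟩ := h0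
  exact hlam₀

theorem F0cond.lam₀_le_deriv (h0 : F0cond f₀ β₀ lam₀) : ∀ x ∈ Icc (0 : ℝ) 1, lam₀ ≤ deriv f₀ x := by
  obtain ⟨-, -, -, -, -, -, -, -, -, -, -, hderiv⟩ := h0
  exact hderiv

theorem F2cond.lam₀_le_deriv (h2 : F2cond f₂ β₂ lam₀) : ∀ x ∈ Icc (0 : ℝ) 1, lam₀ ≤ deriv f₂ x := by
  obtain ⟨-, -, -, -, -, -, hderiv, -⟩ := h2
  exact hderiv

theorem F0cond.lam₀_lt_one (h0 : F0cond f₀ β₀ lam₀) : lam₀ < 1 := by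
  obtain ⟨-, -, -, -, -, -, -, -, -, -, hlam₀, -⟩ := h0
  exact hlam₀

theorem F1cond.gamma_pos (h1 : F1cond f₁ γ lam₀) (hlam₀ : 0 < lam₀) : 0 < γ :=
  hlam₀.trans_le h1.2.1

theorem F0cond.lam₀_le_of_isGreatest (h0 : F0cond f₀ β₀ lam₀) {a lampr : ℝ}
    (ha : a ∈ Icc (0 : ℝ) 1) (hlampr : IsGreatest {y | ∃ x ∈ Icc a 1, y = deriv f₀ x} lampr) :
    lam₀ ≤ lampr := by
  obtain ⟨x, hx, rfl⟩ := hlampr.1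
  exact h0.lam₀_le_deriv x ⟨ha.1.trans hx.1, hx.2⟩

theorem differentiable_fiberMaps (h0 : F0cond f₀ β₀ lam₀) (h1 : F1cond f₁ γ lam₀)
    (h2 : F2cond f₂ β₂ lam₀) : ∀ i, Differentiable ℝ (![f₀, f₁, f₂] i) := by
  intro i
  fin_cases i
  exacts [h0.differentiable, fun x => (h1.hasDerivAt x).differentiableAt, h2.differentiable]

theorem deriv_head_mem_Ioc (hfs : ∀ i, Differentiable ℝ (![f₀, f₁, f₂] i))
    (h0 : F0cond f₀ β₀ lam₀) {a lampr : ℝ} (ha : a ∈ Icc (0 : ℝ) 1)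
    (hlampr : IsGreatest {y | ∃ x ∈ Icc a 1, y = deriv f₀ x} lampr) {q : ℝ} {N : ℕ}
    (horbit : ∀ j < N, f₀^[j] q ∈ Icc a 1) :
    deriv (seqComp ![f₀, f₁, f₂] (fun _ => 0) N) q ∈ Ioc 0 (lampr ^ N) := by
  refine deriv_seqComp_mem_Ioc _ hfs fun j hj => ?_
  have hx := horbit j hj
  rw [seqComp_const]
  exact ⟨h0.lam₀_pos.trans_le (h0.lam₀_le_deriv _ ⟨ha.1.trans hx.1, hx.2⟩),
    hlampr.2 ⟨_, hx, rfl⟩⟩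

theorem deriv_tail_mem_Ioc (hfs : ∀ i, Differentiable ℝ (![f₀, f₁, f₂] i))
    (h0 : F0cond f₀ β₀ lam₀) (h2 : F2cond f₂ β₂ lam₀) {B : ℝ}
    (hB : ∀ x ∈ Icc (0 : ℝ) 1, deriv f₀ x ≤ B ∧ deriv f₂ x ≤ B) {τ : ℕ → Fin 3} {y : ℕ → ℝ}
    {M : ℕ} (hτ : ∀ j ≤ M, τ j = 0 ∨ τ j = 2)
    (hyrec : ∀ j, 1 ≤ j → j ≤ M → y j = ![f₀, f₁, f₂] (τ (j - 1)) (y (j - 1)))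
    (hy : ∀ j ≤ M, y j ∈ Icc (0 : ℝ) 1) :
    deriv (seqComp ![f₀, f₁, f₂] τ (M + 1)) (y 0) ∈ Ioc 0 (B ^ (M + 1)) := by
  refine deriv_seqComp_mem_Ioc _ hfs fun j hj => ?_
  have hjM := Nat.le_of_lt_succ hj
  rw [seqComp_eq_of_rec hyrec j hjM]
  rcases hτ j hjM with hτj | hτj <;> rw [hτj]
  · exact ⟨h0.lam₀_pos.trans_le (h0.lam₀_le_deriv _ (hy j hjM)), (hB _ (hy j hjM)).1⟩
  · exact ⟨h0.lam₀_pos.trans_le (h2.lam₀_le_deriv _ (hy j hjM)), (hB _ (hy j hjM)).2⟩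

theorem pow_mul_le_apply_iterate (h0 : F0cond f₀ β₀ lam₀) (h1 : F1cond f₁ γ lam₀) {a q : ℝ}
    (ha : a ∈ Icc (0 : ℝ) 1) (hq : q < f₀ a) {N : ℕ} (horbit : ∀ j ≤ N, f₀^[j] q ∈ Icc a 1) :
    lam₀ ^ (N + 1) * (γ * (1 - a)) ≤ f₁ (f₀^[N] q) := by
  have hf₀ := h0.differentiable
  have hlam₀ := h0.lam₀_pos
  have hf₀1 : f₀ 1 = 1 := h0.2.2.2.2.1
  have hγ := h1.gamma_pos hlam₀
  have hstep : lam₀ * (1 - a) ≤ 1 - q := by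
    have := mul_sub_le_sub_of_le_deriv_Icc hf₀ h0.lam₀_le_deriv ha
      (right_mem_Icc.2 zero_le_one) ha.2
    rw [hf₀1] at this
    linarith
  have hiter : lam₀ ^ N * (1 - q) ≤ 1 - f₀^[N] q :=
    pow_mul_one_sub_le_one_sub_iterate hf₀ hf₀1 hlam₀.le h0.lam₀_le_deriv
      fun j hj => Icc_subset_Icc ha.1 le_rfl (horbit j hj.le)
  rw [h1.1]
  calc lam₀ ^ (N + 1) * (γ * (1 - a)) = γ * (lam₀ ^ N * (lam₀ * (1 - a))) := by ring
    _ ≤ γ * (lam₀ ^ N * (1 - q)) := by gcongr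
    _ ≤ γ * (1 - f₀^[N] q) := by gcongr

theorem pow_mul_le_of_expanding (h0 : F0cond f₀ β₀ lam₀) (h2 : F2cond f₂ β₂ lam₀) {c δ : ℝ}
    (hc : 0 ≤ c)
    (hcderiv : IsLeast {y | ∃ x ∈ Icc (0 : ℝ) δ, y = min (deriv f₀ x) (deriv f₂ x)} c)
    {τ : ℕ → Fin 3} {y : ℕ → ℝ} {M : ℕ} (hτ : ∀ j ≤ M, τ j = 0 ∨ τ j = 2)
    (hyrec : ∀ j, 1 ≤ j → j ≤ M → y j = ![f₀, f₁, f₂] (τ (j - 1)) (y (j - 1)))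
    (hy : ∀ j ≤ M, y j ∈ Icc (0 : ℝ) δ) :
    c ^ M * y 0 ≤ y M := by
  have hf₀0 : f₀ 0 = 0 := h0.2.2.2.1
  have hf₂0 : f₂ 0 = 0 := h2.2.2.2.1
  have hmin : ∀ x ∈ Icc (0 : ℝ) δ, c ≤ min (deriv f₀ x) (deriv f₂ x) := fun x hx =>
    hcderiv.2 ⟨x, hx, rfl⟩
  refine geom_le hc M fun j hj => ?_
  rw [hyrec (j + 1) (Nat.le_add_left 1 j) hj, Nat.add_sub_cancel]
  rcases hτ j hj.le with hτj | hτj <;> rw [hτj]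
  · exact mul_le_of_le_deriv_Icc h0.differentiable hf₀0
      (fun x hx => (hmin x hx).trans (min_le_left _ _)) (hy j hj.le)
  · exact mul_le_of_le_deriv_Icc h2.differentiable hf₂0
      (fun x hx => (hmin x hx).trans (min_le_right _ _)) (hy j hj.le)

theorem pow_mul_pow_le_one_of_visits (h0 : F0cond f₀ β₀ lam₀) (h1 : F1cond f₁ γ lam₀)
    (h2 : F2cond f₂ β₂ lam₀) {δ βH : ℝ} (hδ : 0 < δ) (hδγ : δ < γ) (hβH : 0 ≤ βH)
    (hβHderiv : IsLeast {y | ∃ x ∈ Icc (0 : ℝ) δ, y = min (deriv f₀ x) (deriv f₂ x)} βH)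
    {N M : ℕ} {q : ℝ}
    (hq : q < f₀ (1 - γ⁻¹ * δ)) (hH' : ∀ j ≤ N, f₀^[j] q ∈ Icc (1 - γ⁻¹ * δ) 1)
    {τ : ℕ → Fin 3} (hτ : ∀ j ≤ M, τ j = 0 ∨ τ j = 2) {y : ℕ → ℝ} (hy0 : y 0 = f₁ (f₀^[N] q))
    (hyrec : ∀ j, 1 ≤ j → j ≤ M → y j = ![f₀, f₁, f₂] (τ (j - 1)) (y (j - 1)))
    (hyH : ∀ j ≤ M, y j ∈ Icc (0 : ℝ) δ) :
    βH ^ M * lam₀ ^ (N + 1) ≤ 1 := by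
  have hy0_ge : lam₀ ^ (N + 1) * δ ≤ y 0 := by
    have := pow_mul_le_apply_iterate h0 h1 (one_sub_inv_mul_mem_Icc hδ.le hδγ) hq hH'
    rwa [← hy0, sub_sub_cancel, mul_inv_cancel_left₀ (hδ.trans hδγ).ne'] at this
  have hyM_ge := pow_mul_le_of_expanding h0 h2 hβH hβHderiv hτ hyrec hyH
  refine le_of_mul_le_mul_right ?_ hδ
  calc βH ^ M * lam₀ ^ (N + 1) * δ = βH ^ M * (lam₀ ^ (N + 1) * δ) := mul_assoc _ _ _
    _ ≤ βH ^ M * y 0 := by gcongr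
    _ ≤ y M := hyM_ge
    _ ≤ 1 * δ := (one_mul δ).symm ▸ (hyH M le_rfl).2

end FiberMaps

theorem log_abs_mul_neg_mul_le {a b γ A Λ : ℝ} {m n : ℕ} (ha : a ∈ Ioc 0 (A ^ m)) (hγ : 0 < γ)
    (hb : b ∈ Ioc 0 (Λ ^ n)) (hΛ : Λ ∈ Icc (0 : ℝ) 1) :
    Real.log |a * (-γ * b)| ≤ m * Real.log A + Real.log γ - n * |Real.log Λ| := by
  have ha0 := ha.1
  have hb0 := hb.1
  rw [neg_mul, mul_neg, abs_neg, abs_of_pos (by positivity), Real.log_mul ha0.ne' (by positivity),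
    Real.log_mul hγ.ne' hb0.ne', ← Real.log_pow, abs_of_nonpos (Real.log_nonpos hΛ.1 hΛ.2),
    mul_neg, sub_neg_eq_add, ← Real.log_pow]
  linarith [Real.log_le_log ha0 ha.2, Real.log_le_log hb0 hb.2]

theorem exponent_lt_of_visits {b p h l₀ l' g : ℝ} {N M L : ℕ} (hp : 0 < p) (hpb : p < b)
    (hh : 0 < h) (hl' : 0 ≤ l') (hg : g ≤ 0) (hL : 1 ≤ L) (hvisits : M * h ≤ (N + 1) * l₀)
    (hstar : l₀ * b / h - l' + 2 / 3 * b < 3 / 4 * p) (hL2 : 4 * l₀ * b / (h * p) < L)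
    (hL3 : L * b + g < (L + 1) * p) :
    g + (M + 1) * b - N * l' < (N + M + 2) * p := by
  have hb : 0 < b := hp.trans hpb
  have hNl' : 0 ≤ (N : ℝ) * l' := by positivity
  have hNp : 0 ≤ (N : ℝ) * p := by positivity
  rcases le_or_gt (M + 1) L with hML | hLM
  · have hML' : (M : ℝ) + 1 ≤ L := by exact_mod_cast hML
    nlinarith [mul_le_mul_of_nonneg_right hML' (sub_pos.2 hpb).le]
  · have hLM' : (L : ℝ) ≤ M := by exact_mod_cast Nat.le_of_lt_succ hLM
    have hM1 : (1 : ℝ) ≤ M := le_trans (by exact_mod_cast hL) hLM'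
    set c := l₀ / h
    have hMc : (M : ℝ) ≤ (N + 1) * c := by
      rw [mul_div_assoc', le_div_iff₀ hh]
      exact hvisits
    have hstar' : c * b - l' + 2 / 3 * b < 3 / 4 * p := by rwa [div_mul_eq_mul_div]
    have hcb : 4 * (c * b) < M * p := by
      rw [show 4 * l₀ * b / (h * p) = 4 * (c * b) / p by ring, div_lt_iff₀ hp] at hL2
      nlinarith
    have hNstar : N * (c * b - l') ≤ N * (3 / 4 * p - 2 / 3 * b) :=
      mul_le_mul_of_nonneg_left (by linarith) N.cast_nonneg
    have hMb : M * b ≤ (N + 1) * c * b := by gcongr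
    rcases le_or_gt (1 / 3) c with hc | hc
    · nlinarith
    · have hN : (2 : ℝ) < N := by nlinarith
      nlinarith

theorem mul_log_le_of_pow_mul_pow_le_one {a b : ℝ} {m n : ℕ} (ha : 0 < a) (hb : b ∈ Ioc (0 : ℝ) 1)
    (h : a ^ m * b ^ n ≤ 1) : m * Real.log a ≤ n * |Real.log b| := by
  have := Real.log_le_log (by have := hb.1; positivity) h
  rw [Real.log_one, Real.log_mul (by positivity) (pow_ne_zero _ hb.1.ne'), Real.log_pow,
    Real.log_pow] at this
  rw [abs_of_nonpos (Real.log_nonpos hb.1.le hb.2)]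
  linarith

theorem stmt3_general (f₀ f₁ f₂ : ℝ → ℝ) (β₀ lam₀ γ β₂ δ βpr βH lampr : ℝ) (L : ℕ)
    (h0 : F0cond f₀ β₀ lam₀) (h1 : F1cond f₁ γ lam₀) (h2 : F2cond f₂ β₂ lam₀)
    (h012 : F012cond f₀ f₁ f₂ γ lam₀ β₀ β₂ δ βpr βH lampr L)
    (N M : ℕ) (τ : ℕ → Fin 3) (hτ : ∀ j ≤ M, τ j = 0 ∨ τ j = 2)
    (q : ℝ) (hq2 : q < f₀ (1 - γ⁻¹ * δ))
    (hH' : ∀ j ≤ N, f₀^[j] q ∈ Set.Icc (1 - γ⁻¹ * δ) 1)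
    (y : ℕ → ℝ) (hy0 : y 0 = f₁ (f₀^[N] q))
    (hyrec : ∀ j, 1 ≤ j → j ≤ M → y j = ![f₀, f₁, f₂] (τ (j - 1)) (y (j - 1)))
    (hyH : ∀ j ≤ M, y j ∈ Set.Icc (0:ℝ) δ) :
    (1 / ((N : ℝ) + (M : ℝ) + 2)) *
        Real.log |deriv (wordComp ![f₀, f₁, f₂]
          (List.replicate N 0 ++ [1] ++ List.ofFn (fun j : Fin (M + 1) => τ j))) q|
      < Real.log βpr := by
  obtain ⟨hderiv_le, hδ, hδγ, -, -, -, -, -, hβpr1, hβpr_lt, hβH, hβH1, -, hlampr, hlampr1, hstar,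
    hL1, hL2, hL3⟩ := h012
  have hfs := differentiable_fiberMaps h0 h1 h2
  have hγ := h1.gamma_pos h0.lam₀_pos
  have ha := one_sub_inv_mul_mem_Icc hδ.le hδγ
  have hhead := deriv_head_mem_Ioc hfs h0 ha hlampr fun j hj => hH' j hj.le
  have htail := deriv_tail_mem_Ioc hfs h0 h2 hderiv_le hτ hyrec fun j hj =>
    Icc_subset_Icc le_rfl (hδγ.trans h1.2.2).le (hyH j hj)
  have hvisits := mul_log_le_of_pow_mul_pow_le_one (zero_lt_one.trans hβH1)
    ⟨h0.lam₀_pos, h0.lam₀_lt_one.le⟩ (pow_mul_pow_le_one_of_visits h0 h1 h2 hδ hδγ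
      (zero_le_one.trans hβH1.le) hβH hq2 hH' hτ hy0 hyrec hyH)
  have hy0' : ![f₀, f₁, f₂] 1 (seqComp ![f₀, f₁, f₂] (fun _ => 0) N q) = y 0 := by
    rw [seqComp_const, hy0]
    rfl
  rw [← List.ofFn_const, deriv_wordComp_ofFn_append_ofFn _ hfs (fun _ => 0) τ, hy0',
    show ![f₀, f₁, f₂] 1 = f₁ from rfl, (h1.hasDerivAt _).deriv]
  have hlog := log_abs_mul_neg_mul_le htail hγ hhead
    ⟨h0.lam₀_pos.le.trans (h0.lam₀_le_of_isGreatest ha hlampr), hlampr1.le⟩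
  have hβprB : βpr < max β₀ β₂ := hβpr_lt.trans_le min_le_max
  rw [Real.log_mul (pow_ne_zero _ (by linarith)) hγ.ne', Real.log_pow,
    div_lt_iff₀ (by positivity)] at hL3
  push_cast at hvisits hlog
  have := exponent_lt_of_visits (Real.log_pos hβpr1)
    (Real.log_lt_log (zero_lt_one.trans hβpr1) hβprB) (Real.log_pos hβH1) (abs_nonneg _)
    (Real.log_nonpos hγ.le h1.2.2.le) hL1 hvisits hstar hL2 (by linarith)
  rw [one_div_mul_eq_div, div_lt_iff₀ (by positivity)]
  linarith

/-- finite-time exponent estimate along a word `0^N 1 τ₀ … τ_M`. -/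
theorem stmt3 (f₀ f₁ f₂ : ℝ → ℝ) (β₀ lam₀ γ β₂ δ βpr βH lampr : ℝ) (L : ℕ)
    (h0 : F0cond f₀ β₀ lam₀) (h1 : F1cond f₁ γ lam₀) (h2 : F2cond f₂ β₂ lam₀)
    (h012 : F012cond f₀ f₁ f₂ γ lam₀ β₀ β₂ δ βpr βH lampr L)
    (N M : ℕ) (τ : ℕ → Fin 3) (hτ : ∀ j ≤ M, τ j = 0 ∨ τ j = 2)
    (q : ℝ) (hq1 : 1 - γ⁻¹ * δ ≤ q) (hq2 : q < f₀ (1 - γ⁻¹ * δ))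
    (hH' : ∀ j ≤ N, f₀^[j] q ∈ Set.Icc (1 - γ⁻¹ * δ) 1)
    (y : ℕ → ℝ) (hy0 : y 0 = f₁ (f₀^[N] q))
    (hyrec : ∀ j, 1 ≤ j → j ≤ M → y j = ![f₀, f₁, f₂] (τ (j - 1)) (y (j - 1)))
    (hyH : ∀ j ≤ M, y j ∈ Set.Icc (0:ℝ) δ) :
    (1 / ((N : ℝ) + (M : ℝ) + 2)) *
        Real.log |deriv (wordComp ![f₀, f₁, f₂]
          (List.replicate N 0 ++ [1] ++ List.ofFn (fun j : Fin (M + 1) => τ j))) q|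
      < Real.log βpr :=
  stmt3_general f₀ f₁ f₂ β₀ lam₀ γ β₂ δ βpr βH lampr L h0 h1 h2 h012 N M τ hτ q hq2 hH' y hy0 hyrec
    hyH

end
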